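/- Let q₀, g ∈ ℝ, let I ⊆ ℝ be an open interval, and let h, b : ℝ → ℝ be differentiable on I with h(x) > 0 for all x ∈ I. If the function Υ(x) := q₀²/(2·h(x)²) + g·(h(x) + b(x)) is constant on I, then for every x ∈ I the steady momentum balance holds: deriv(fun x ↦ q₀²/h(x) + g·h(x)²/2)(x) + g·h(x)·deriv b(x) = 0. -/

import Mathlib

/-! Differentiating `Υ = q₀²/(2h²) + g(h + b)` gives `Υ' = -q₀² h'/h³ + g(h' + b')`, while the momentum
flux has derivative `-q₀² h'/h² + g h h'`. Hence `∂ₓ(q₀²/h + g h²/2) + g h b' = h Υ'`, which vanishes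
wherever `Υ` is locally constant. -/

noncomputable section

namespace ShallowWater

def momentumFlux (q₀ g : ℝ) (h : ℝ → ℝ) (x : ℝ) : ℝ :=
  q₀ ^ 2 / h x + g * (h x) ^ 2 / 2

def energy (q₀ g : ℝ) (h b : ℝ → ℝ) (x : ℝ) : ℝ :=
  q₀ ^ 2 / (2 * (h x) ^ 2) + g * (h x + b x)

variable {q₀ g x h' b' : ℝ} {h b : ℝ → ℝ}

theorem hasDerivAt_momentumFlux (hh : HasDerivAt h h' x) (hx : h x ≠ 0) :
    HasDerivAt (momentumFlux q₀ g h) (-(q₀ ^ 2) * h' / h x ^ 2 + g * h x * h') x :=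
  (((hasDerivAt_const x (q₀ ^ 2)).fun_div hh hx).fun_add
    (((hh.fun_pow 2).const_mul g).div_const 2)).congr_deriv (by field_simp; ring)

theorem hasDerivAt_energy (hh : HasDerivAt h h' x) (hb : HasDerivAt b b' x) (hx : h x ≠ 0) :
    HasDerivAt (energy q₀ g h b) (-(q₀ ^ 2) * h' / h x ^ 3 + g * (h' + b')) x :=
  (((hasDerivAt_const x (q₀ ^ 2)).fun_div ((hh.fun_pow 2).const_mul 2) (by positivity)).fun_add
    ((hh.fun_add hb).const_mul g)).congr_deriv (by field_simp; ring)

theorem deriv_momentumFlux_add_eq_mul_deriv_energy (hh : DifferentiableAt ℝ h x)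
    (hb : DifferentiableAt ℝ b x) (hx : h x ≠ 0) :
    deriv (momentumFlux q₀ g h) x + g * h x * deriv b x = h x * deriv (energy q₀ g h b) x := by
  rw [(hasDerivAt_momentumFlux hh.hasDerivAt hx).deriv,
    (hasDerivAt_energy hh.hasDerivAt hb.hasDerivAt hx).deriv]
  field_simp
  ring

end ShallowWater

end

open ShallowWater in
/-- On an open interval where `h` and `b` are differentiable and `h > 0`, if
`Υ = q₀²/(2h²) + g(h + b)` is constant, then the frictionless steady momentum balance
`∂ₓ(q₀²/h + g h²/2) + g h ∂ₓ b = 0` holds at every point of the interval. -/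
theorem stmt_6 (q₀ g : ℝ) (a₁ a₂ : ℝ) (h b : ℝ → ℝ)
    (hh : ∀ x ∈ Set.Ioo a₁ a₂, DifferentiableAt ℝ h x)
    (hb : ∀ x ∈ Set.Ioo a₁ a₂, DifferentiableAt ℝ b x)
    (hpos : ∀ x ∈ Set.Ioo a₁ a₂, 0 < h x)
    (hconst : ∀ x ∈ Set.Ioo a₁ a₂, ∀ y ∈ Set.Ioo a₁ a₂,
      q₀ ^ 2 / (2 * (h x) ^ 2) + g * (h x + b x)
        = q₀ ^ 2 / (2 * (h y) ^ 2) + g * (h y + b y)) :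
    ∀ x ∈ Set.Ioo a₁ a₂,
      deriv (fun y => q₀ ^ 2 / h y + g * (h y) ^ 2 / 2) x + g * h x * deriv b x = 0 := by
  intro x hx
  have henergy_const : energy q₀ g h b =ᶠ[nhds x] fun _ => energy q₀ g h b x := by
    filter_upwards [isOpen_Ioo.mem_nhds hx] with y hy
    exact hconst y hy x hx
  have henergy_deriv : deriv (energy q₀ g h b) x = 0 := by
    rw [henergy_const.deriv_eq, deriv_const]
  rw [← mul_zero (h x), ← henergy_deriv]
  exact deriv_momentumFlux_add_eq_mul_deriv_energy (hh x hx) (hb x hx) (hpos x hx).ne'
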